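/- (Reflection of a spherical wavefront centred at the origin.) Let ξ₀, η₀ ∈ ℂ and r₀ ∈ ℝ, and let β₀ ∈ ℝ satisfy β₀² = 4η₀η̄₀ + (1 + ξ₀ξ̄₀)²r₀². Assume 2(η̄₀ − η₀ξ̄₀²) + 2ξ̄₀(1 + ξ₀ξ̄₀)r₀ ≠ 0 and define ξ₁ = (2(η₀ξ̄₀ + η̄₀ξ₀) − (1 − ξ₀²ξ̄₀²)r₀ + (1 + ξ₀ξ̄₀)β₀)/(2(η̄₀ − η₀ξ̄₀²) + 2ξ̄₀(1 + ξ₀ξ̄₀)r₀). Then: (a) (1 + ξ̄₀ξ₁)²η₀ − (ξ₀ − ξ₁)²η̄₀ + (ξ₀ − ξ₁)(1 + ξ̄₀ξ₁)(1 + ξ₀ξ̄₀)r₀ = 0, i.e. the incident line of direction ξ₁ through the surface point determined by (ξ₀,η₀,r₀) has twistor coordinate 0 and hence passes through the origin; and (b) provided the relevant denominators are nonzero, the reflected direction (2ξ₀ξ̄₁ + 1 − ξ₀ξ̄₀)/((1 − ξ₀ξ̄₀)ξ̄₁ − 2ξ̄₀) equals (2η₀ + 2η̄₀ξ₀² + 2ξ₀β₀)/(2(ξ₀η̄₀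 − ξ̄₀η₀) − (1 + ξ₀ξ̄₀)²r₀ + (1 − ξ₀ξ̄₀)β₀). -/

import Mathlib

open ComplexConjugate

/-!
Up to the factor `(1 + |ξ₀|²)⁻²`, the twistor coordinate of the line of direction `ξ` through the
surface point is a quadratic polynomial `a ξ² + b ξ + c` whose middle coefficient `b` is real and
whose outer coefficients satisfy `conj a = -c`. Its discriminant `b² + 4|c|²` equals
`(1 + |ξ₀|²)² (4|η₀|² + (1 + |ξ₀|²)² r₀²) = ((1 + |ξ₀|²) β₀)²`, so `ξ₁` is a root by the quadratic
formula. Conjugating, `ξ̄₁ = (b + (1 + |ξ₀|²) β₀) / (2c)`; substituted into the reflection law, the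
numerator and denominator both become `(1 + |ξ₀|²) / (2c)` times the claimed ones.
-/

namespace SphericalWavefront

variable (ξ₀ η₀ : ℂ) (r₀ : ℝ)

/-- `(1 + |ξ₀|²)²` times the twistor coordinate of the line of direction `ξ` through the surface
point with normal data `(ξ₀, η₀)` and potential value `r₀`. -/
def twistorNumerator (ξ : ℂ) : ℂ :=
  (1 + conj ξ₀ * ξ) ^ 2 * η₀ - (ξ₀ - ξ) ^ 2 * conj η₀ +
    (ξ₀ - ξ) * (1 + conj ξ₀ * ξ) * (1 + ξ₀ * conj ξ₀) * (r₀ : ℂ)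

def quadCoeff : ℂ := conj ξ₀ ^ 2 * η₀ - conj η₀ - conj ξ₀ * (1 + ξ₀ * conj ξ₀) * r₀

def linCoeff : ℂ := 2 * (η₀ * conj ξ₀ + conj η₀ * ξ₀) - (1 - ξ₀ ^ 2 * conj ξ₀ ^ 2) * r₀

def constCoeff : ℂ := η₀ - conj η₀ * ξ₀ ^ 2 + ξ₀ * (1 + ξ₀ * conj ξ₀) * r₀

theorem twistorNumerator_eq_quadratic (ξ : ℂ) :
    twistorNumerator ξ₀ η₀ r₀ ξ =
      quadCoeff ξ₀ η₀ r₀ * (ξ * ξ) + linCoeff ξ₀ η₀ r₀ * ξ + constCoeff ξ₀ η₀ r₀ := by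
  unfold twistorNumerator quadCoeff linCoeff constCoeff
  ring

theorem conj_linCoeff : conj (linCoeff ξ₀ η₀ r₀) = linCoeff ξ₀ η₀ r₀ := by
  simp only [linCoeff, map_sub, map_mul, map_add, map_pow, map_one, map_ofNat, Complex.conj_conj,
    Complex.conj_ofReal]
  ring

theorem conj_quadCoeff : conj (quadCoeff ξ₀ η₀ r₀) = -constCoeff ξ₀ η₀ r₀ := by
  simp only [quadCoeff, constCoeff, map_sub, map_mul, map_add, map_pow, map_one,
    Complex.conj_conj, Complex.conj_ofReal]
  ring

theorem discrim_coeffs :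
    discrim (quadCoeff ξ₀ η₀ r₀) (linCoeff ξ₀ η₀ r₀) (constCoeff ξ₀ η₀ r₀) =
      (1 + ξ₀ * conj ξ₀) ^ 2 * (4 * η₀ * conj η₀ + (1 + ξ₀ * conj ξ₀) ^ 2 * (r₀ : ℂ) ^ 2) := by
  unfold discrim quadCoeff linCoeff constCoeff
  ring

theorem one_add_mul_conj_ne_zero (z : ℂ) : 1 + z * conj z ≠ 0 := by
  rw [Complex.mul_conj]
  exact_mod_cast (add_pos_of_pos_of_nonneg one_pos (Complex.normSq_nonneg z)).ne'

theorem twistorNumerator_root (β : ℂ)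
    (hβ : β ^ 2 = 4 * η₀ * conj η₀ + (1 + ξ₀ * conj ξ₀) ^ 2 * (r₀ : ℂ) ^ 2)
    (ha : quadCoeff ξ₀ η₀ r₀ ≠ 0) :
    twistorNumerator ξ₀ η₀ r₀
      ((linCoeff ξ₀ η₀ r₀ + (1 + ξ₀ * conj ξ₀) * β) / (-2 * quadCoeff ξ₀ η₀ r₀)) = 0 := by
  have hdisc : discrim (quadCoeff ξ₀ η₀ r₀) (linCoeff ξ₀ η₀ r₀) (constCoeff ξ₀ η₀ r₀) =
      (-((1 + ξ₀ * conj ξ₀) * β)) * (-((1 + ξ₀ * conj ξ₀) * β)) := by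
    rw [discrim_coeffs, ← hβ]
    ring
  rw [twistorNumerator_eq_quadratic, quadratic_eq_zero_iff ha hdisc]
  left
  ring

theorem conj_quadratic_root (β : ℝ) :
    conj ((linCoeff ξ₀ η₀ r₀ + (1 + ξ₀ * conj ξ₀) * β) / (-2 * quadCoeff ξ₀ η₀ r₀)) =
      (linCoeff ξ₀ η₀ r₀ + (1 + ξ₀ * conj ξ₀) * β) / (2 * constCoeff ξ₀ η₀ r₀) := by
  simp only [map_div₀, map_add, map_mul, map_neg, map_one, map_ofNat, Complex.conj_conj,
    Complex.conj_ofReal, conj_linCoeff, conj_quadCoeff]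
  ring

/-- The reflection law for normal direction `ξ₀` and incident direction `ξ`. -/
noncomputable def reflectedDirection (ξ : ℂ) : ℂ :=
  (2 * ξ₀ * conj ξ + 1 - ξ₀ * conj ξ₀) / ((1 - ξ₀ * conj ξ₀) * conj ξ - 2 * conj ξ₀)

theorem reflectedDirection_eq (β : ℂ) (hc : constCoeff ξ₀ η₀ r₀ ≠ 0) {ξ : ℂ}
    (hξ : conj ξ = (linCoeff ξ₀ η₀ r₀ + (1 + ξ₀ * conj ξ₀) * β) / (2 * constCoeff ξ₀ η₀ r₀)) :
    reflectedDirection ξ₀ ξ =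
      (2 * η₀ + 2 * conj η₀ * ξ₀ ^ 2 + 2 * ξ₀ * β) /
        (2 * (ξ₀ * conj η₀ - conj ξ₀ * η₀) - (1 + ξ₀ * conj ξ₀) ^ 2 * (r₀ : ℂ) +
          (1 - ξ₀ * conj ξ₀) * β) := by
  have hξ' : conj ξ * (2 * constCoeff ξ₀ η₀ r₀) = linCoeff ξ₀ η₀ r₀ + (1 + ξ₀ * conj ξ₀) * β := by
    rw [hξ]
    field_simp
  have h2c : 2 * constCoeff ξ₀ η₀ r₀ ≠ 0 := mul_ne_zero two_ne_zero hc
  unfold reflectedDirection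
  calc _ = (2 * ξ₀ * conj ξ + 1 - ξ₀ * conj ξ₀) * (2 * constCoeff ξ₀ η₀ r₀) /
        (((1 - ξ₀ * conj ξ₀) * conj ξ - 2 * conj ξ₀) * (2 * constCoeff ξ₀ η₀ r₀)) :=
        (mul_div_mul_right _ _ h2c).symm
    _ = (1 + ξ₀ * conj ξ₀) * (2 * η₀ + 2 * conj η₀ * ξ₀ ^ 2 + 2 * ξ₀ * β) /
        ((1 + ξ₀ * conj ξ₀) * (2 * (ξ₀ * conj η₀ - conj ξ₀ * η₀) -
          (1 + ξ₀ * conj ξ₀) ^ 2 * (r₀ : ℂ) + (1 - ξ₀ * conj ξ₀) * β)) := by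
        simp only [linCoeff, constCoeff] at hξ' ⊢
        congr 1
        · linear_combination 2 * ξ₀ * hξ'
        · linear_combination (1 - ξ₀ * conj ξ₀) * hξ'
    _ = _ := mul_div_mul_left _ _ (one_add_mul_conj_ne_zero ξ₀)

end SphericalWavefront

open SphericalWavefront in
theorem spherical_wave_reflection (ξ₀ η₀ : ℂ) (r₀ : ℝ) (β₀ : ℝ)
    (hβ : (β₀ : ℂ) ^ 2 = 4 * η₀ * conj η₀ + (1 + ξ₀ * conj ξ₀) ^ 2 * (r₀ : ℂ) ^ 2)
    (hden : 2 * (conj η₀ - η₀ * (conj ξ₀) ^ 2) + 2 * conj ξ₀ * (1 + ξ₀ * conj ξ₀) * (r₀ : ℂ) ≠ 0)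
    (ξ₁ : ℂ)
    (hξ₁ : ξ₁ = (2 * (η₀ * conj ξ₀ + conj η₀ * ξ₀) - (1 - ξ₀ ^ 2 * (conj ξ₀) ^ 2) * (r₀ : ℂ) +
        (1 + ξ₀ * conj ξ₀) * (β₀ : ℂ)) /
      (2 * (conj η₀ - η₀ * (conj ξ₀) ^ 2) + 2 * conj ξ₀ * (1 + ξ₀ * conj ξ₀) * (r₀ : ℂ))) :
    ((1 + conj ξ₀ * ξ₁) ^ 2 * η₀ - (ξ₀ - ξ₁) ^ 2 * conj η₀ +
        (ξ₀ - ξ₁) * (1 + conj ξ₀ * ξ₁) * (1 + ξ₀ * conj ξ₀) * (r₀ : ℂ) = 0) ∧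
    ((1 - ξ₀ * conj ξ₀) * conj ξ₁ - 2 * conj ξ₀ ≠ 0 →
      2 * (ξ₀ * conj η₀ - conj ξ₀ * η₀) - (1 + ξ₀ * conj ξ₀) ^ 2 * (r₀ : ℂ) +
        (1 - ξ₀ * conj ξ₀) * (β₀ : ℂ) ≠ 0 →
      (2 * ξ₀ * conj ξ₁ + 1 - ξ₀ * conj ξ₀) /
          ((1 - ξ₀ * conj ξ₀) * conj ξ₁ - 2 * conj ξ₀) =
        (2 * η₀ + 2 * conj η₀ * ξ₀ ^ 2 + 2 * ξ₀ * (β₀ : ℂ)) /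
          (2 * (ξ₀ * conj η₀ - conj ξ₀ * η₀) - (1 + ξ₀ * conj ξ₀) ^ 2 * (r₀ : ℂ) +
            (1 - ξ₀ * conj ξ₀) * (β₀ : ℂ))) := by
  have hD : 2 * (conj η₀ - η₀ * (conj ξ₀) ^ 2) + 2 * conj ξ₀ * (1 + ξ₀ * conj ξ₀) * (r₀ : ℂ) =
      -2 * quadCoeff ξ₀ η₀ r₀ := by
    unfold quadCoeff
    ring
  rw [hD] at hden hξ₁
  have ha : quadCoeff ξ₀ η₀ r₀ ≠ 0 := right_ne_zero_of_mul hden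
  have hc : constCoeff ξ₀ η₀ r₀ ≠ 0 := by
    rw [← neg_ne_zero, ← conj_quadCoeff]
    exact (map_ne_zero _).2 ha
  refine ⟨?_, fun _ _ => ?_⟩
  · rw [hξ₁]
    exact twistorNumerator_root ξ₀ η₀ r₀ β₀ hβ ha
  · exact reflectedDirection_eq ξ₀ η₀ r₀ β₀ hc (by rw [hξ₁]; exact conj_quadratic_root ξ₀ η₀ r₀ β₀)
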